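/- arXiv:2312.15358 — 3 statements merged into one kernel-verified Lean document; each statement's English description precedes it below -/
import Mathlib

section
/- For η ∈ {0,1}^ℕ and x ∈ ℕ, the record indicator r(η,x)=1 holds if and only if Σ_{y=z}^{x}(1 − 2η(y)) > 0 for every 1 ≤ z ≤ x; equivalently, r(η,x)=1 if and only if the carrier with infinite capacity satisfies W_∞(η,x-1) = W_∞(η,x) = 0. -/
/-- Seat occupation functions 𝒲_k(η,x). -/
def seatW (η : ℕ → ℤ) : ℕ → ℕ → ℤ
  | 0, _ => 0
  | x + 1, k =>
      seatW η x k
        + η (x + 1) * (1 - seatW η x k) * (∏ m ∈ Finset.Ico 1 k, seatW η x m)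
        - (1 - η (x + 1)) * seatW η x k * (∏ m ∈ Finset.Ico 1 k, (1 - seatW η x m))

/-- Boarding indicator η↑_k(x). -/
def seatUp (η : ℕ → ℤ) (k x : ℕ) : ℤ :=
  η x * (1 - seatW η (x - 1) k) * (∏ m ∈ Finset.Ico 1 k, seatW η (x - 1) m)

/-- Alighting indicator η↓_k(x). -/
def seatDown (η : ℕ → ℤ) (k x : ℕ) : ℤ :=
  (1 - η x) * seatW η (x - 1) k * (∏ m ∈ Finset.Ico 1 k, (1 - seatW η (x - 1) m))

/-- Record indicator r(η,x). (Seat events at x have seat number ≤ x.) -/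
def recordInd (η : ℕ → ℤ) (x : ℕ) : ℤ :=
  1 - ∑ k ∈ Finset.Icc 1 x, (seatUp η k x + seatDown η k x)

/-- ξ_k(η,x). -/
def xiSeat (η : ℕ → ℤ) (k x : ℕ) : ℤ :=
  (x : ℤ) - ∑ y ∈ Finset.Icc 1 x, ∑ m ∈ Finset.Icc 1 k, (seatUp η m y + seatDown η m y)

/-- s_k(η,i). -/
noncomputable def sSeat (η : ℕ → ℤ) (k i : ℕ) : ℕ :=
  sInf {x : ℕ | xiSeat η k x = (i : ℤ)}

/-- k-skip map Ψ_k. -/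
noncomputable def skip (η : ℕ → ℤ) (k : ℕ) : ℕ → ℤ := fun x => η (sSeat η k x)

/-- Slot decomposition ζ_k(η,i). -/
noncomputable def zeta (η : ℕ → ℤ) (k i : ℕ) : ℤ :=
  ∑ y ∈ Finset.Icc (sSeat η k i + 1) (sSeat η k (i + 1)),
    (seatUp η k y - seatUp η (k + 1) y)

/-- Carrier with capacity ℓ. -/
def carrier (η : ℕ → ℤ) (ℓ : ℕ) : ℕ → ℤ
  | 0 => 0
  | x + 1 =>
      if η (x + 1) = 1 ∧ carrier η ℓ x < (ℓ : ℤ) then carrier η ℓ x + 1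
      else if η (x + 1) = 0 ∧ 0 < carrier η ℓ x then carrier η ℓ x - 1
      else carrier η ℓ x

/-- Carrier with infinite capacity. -/
def carrierInf (η : ℕ → ℤ) : ℕ → ℤ
  | 0 => 0
  | x + 1 => if η (x + 1) = 1 then carrierInf η x + 1 else max (carrierInf η x - 1) 0

/-- One-step BBS(ℓ) evolution. -/
def tEvol (η : ℕ → ℤ) (ℓ : ℕ) : ℕ → ℤ :=
  fun x => η x + carrier η ℓ (x - 1) - carrier η ℓ x

/-- One-step BBS(∞) evolution. -/
def tEvolInf (η : ℕ → ℤ) : ℕ → ℤ :=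
  fun x => η x + carrierInf η (x - 1) - carrierInf η x

section RecordAux
open Finset

lemma carrierInf_nonneg (η : ℕ → ℤ) : ∀ x, 0 ≤ carrierInf η x
  | 0 => le_refl 0
  | x + 1 => by
    have := carrierInf_nonneg η x
    simp only [carrierInf]
    split
    · linarith
    · exact le_max_right _ _

lemma lemL (η : ℕ → ℤ) (hη : ∀ x, η x = 0 ∨ η x = 1) :
    ∀ w z, 1 ≤ z → z ≤ w → -(carrierInf η w) ≤ ∑ y ∈ Icc z w, (1 - 2 * η y) := by
  intro w
  induction w with
  | zero => intro z h1 h2; omega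
  | succ w ih =>
    intro z h1 h2
    have hnn := carrierInf_nonneg η w
    rcases Nat.eq_or_lt_of_le h2 with he | hlt
    · subst he
      rw [Icc_self, sum_singleton]
      simp only [carrierInf]
      rcases hη (w+1) with h | h
      · rw [h, if_neg (by norm_num)]
        have := le_max_right (carrierInf η w - 1) (0:ℤ)
        omega
      · rw [h, if_pos rfl]; omega
    · have hzw : z ≤ w := by omega
      rw [Finset.sum_Icc_succ_top h2]
      have hih := ih z h1 hzw
      simp only [carrierInf]
      rcases hη (w+1) with h | h
      · rw [h, if_neg (by norm_num)]
        rcases le_total (carrierInf η w - 1) 0 with hc | hc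
        · rw [max_eq_right hc]; omega
        · rw [max_eq_left hc]; omega
      · rw [h, if_pos rfl]; omega

lemma lemM (η : ℕ → ℤ) (hη : ∀ x, η x = 0 ∨ η x = 1) :
    ∀ w, 0 < carrierInf η w →
      ∃ z, 1 ≤ z ∧ z ≤ w ∧ ∑ y ∈ Icc z w, (1 - 2 * η y) ≤ -(carrierInf η w) := by
  intro w
  induction w with
  | zero => simp [carrierInf]
  | succ w ih =>
    intro hpos
    have hnn := carrierInf_nonneg η w
    simp only [carrierInf] at hpos ⊢
    rcases hη (w+1) with h | h
    · rw [h, if_neg (by norm_num)] at hpos ⊢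
      have hc : 0 < carrierInf η w - 1 := by
        by_contra hc
        push_neg at hc
        rw [max_eq_right hc] at hpos
        omega
      rw [max_eq_left (le_of_lt hc)] at hpos ⊢
      obtain ⟨z, h1, h2, h3⟩ := ih (by omega)
      refine ⟨z, h1, by omega, ?_⟩
      rw [Finset.sum_Icc_succ_top (show z ≤ w + 1 by omega), h]
      omega
    · rw [h, if_pos rfl] at hpos ⊢
      rcases eq_or_lt_of_le hnn with hc | hc
      · refine ⟨w + 1, by omega, le_refl _, ?_⟩
        rw [Icc_self, sum_singleton, h]
        omega
      · obtain ⟨z, h1, h2, h3⟩ := ih hc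
        refine ⟨z, h1, by omega, ?_⟩
        rw [Finset.sum_Icc_succ_top (show z ≤ w + 1 by omega), h]
        omega

lemma prod_zo {s : Finset ℕ} {f : ℕ → ℤ} (h : ∀ m ∈ s, f m = 0 ∨ f m = 1) :
    (∏ m ∈ s, f m) = 0 ∨ (∏ m ∈ s, f m) = 1 := by
  refine Finset.prod_induction f (fun z => z = 0 ∨ z = 1) ?_ (Or.inr rfl) h
  rintro a b (ha | ha) hb <;> rcases hb with hb | hb <;> simp [ha, hb]

lemma seatW_zo (η : ℕ → ℤ) (hη : ∀ x, η x = 0 ∨ η x = 1) :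
    ∀ x k, seatW η x k = 0 ∨ seatW η x k = 1 := by
  intro x
  induction x with
  | zero => intro k; left; rfl
  | succ x ih =>
    intro k
    have hP := prod_zo (s := Ico 1 k) (f := seatW η x) (fun m _ => ih m)
    have hQ := prod_zo (s := Ico 1 k) (f := fun m => 1 - seatW η x m)
      (fun m _ => by rcases ih m with h | h <;> simp [h])
    simp only [seatW]
    rcases hη (x+1) with h | h <;> rcases ih k with h1 | h1 <;>
      rcases hP with hp | hp <;> rcases hQ with hq | hq <;>
      simp [h, h1, hp, hq]

lemma seatW_big (η : ℕ → ℤ) : ∀ x k, x < k → seatW η x k = 0 := by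
  intro x
  induction x with
  | zero => intro k _; rfl
  | succ x ih =>
    intro k hk
    have h1 : seatW η x k = 0 := ih k (by omega)
    have h2 : (∏ m ∈ Finset.Ico 1 k, seatW η x m) = 0 :=
      Finset.prod_eq_zero (Finset.mem_Ico.mpr ⟨by omega, by omega⟩) (ih (x+1) (by omega))
    show seatW η x k
        + η (x + 1) * (1 - seatW η x k) * (∏ m ∈ Finset.Ico 1 k, seatW η x m)
        - (1 - η (x + 1)) * seatW η x k * (∏ m ∈ Finset.Ico 1 k, (1 - seatW η x m)) = 0
    rw [h1, h2]
    ring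

lemma sum_ind_one (T : ℕ → ℤ) (n : ℕ)
    (h01 : ∀ k, 1 ≤ k → k ≤ n → T k = 0 ∨ T k = 1)
    (hex : ∃ k, 1 ≤ k ∧ k ≤ n ∧ T k = 0) :
    ∑ k ∈ Icc 1 n, (1 - T k) * ∏ m ∈ Ico 1 k, T m = 1 := by
  have hdec : DecidablePred fun k => 1 ≤ k ∧ k ≤ n ∧ T k = 0 := fun k => instDecidableAnd
  let m₀ := Nat.find hex
  have hm : 1 ≤ m₀ ∧ m₀ ≤ n ∧ T m₀ = 0 := Nat.find_spec hex
  have hT1 : ∀ j, 1 ≤ j → j < m₀ → T j = 1 := by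
    intro j hj1 hjm
    have hjn : j ≤ n := le_trans (le_of_lt hjm) hm.2.1
    rcases h01 j hj1 hjn with h | h
    · exact absurd ⟨hj1, hjn, h⟩ (Nat.find_min hex hjm)
    · exact h
  rw [Finset.sum_eq_single_of_mem m₀ (Finset.mem_Icc.mpr ⟨hm.1, hm.2.1⟩) ?_]
  · rw [hm.2.2, Finset.prod_eq_one ?_]
    · ring
    · intro i hi
      rw [Finset.mem_Ico] at hi
      exact hT1 i hi.1 hi.2
  · intro k hk hne
    rw [Finset.mem_Icc] at hk
    rcases lt_or_gt_of_ne hne with hlt | hgt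
    · rw [hT1 k hk.1 hlt]; ring
    · rw [Finset.prod_eq_zero (Finset.mem_Ico.mpr ⟨hm.1, hgt⟩) hm.2.2]; ring

lemma inner_up (η : ℕ → ℤ) (hη : ∀ x, η x = 0 ∨ η x = 1) (w : ℕ) :
    ∑ k ∈ Icc 1 (w+1), (1 - seatW η w k) * ∏ m ∈ Ico 1 k, seatW η w m = 1 :=
  sum_ind_one (seatW η w) (w+1) (fun k _ _ => seatW_zo η hη w k)
    ⟨w+1, by omega, le_refl _, seatW_big η w (w+1) (by omega)⟩

lemma inner_down (η : ℕ → ℤ) (hη : ∀ x, η x = 0 ∨ η x = 1) (w : ℕ)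
    (hkey : ∑ k ∈ Icc 1 w, seatW η w k = carrierInf η w) :
    ∑ k ∈ Icc 1 (w+1), seatW η w k * ∏ m ∈ Ico 1 k, (1 - seatW η w m)
      = if carrierInf η w = 0 then 0 else 1 := by
  split_ifs with hc
  · -- all seats empty
    have hz : ∀ k ∈ Icc 1 w, seatW η w k = 0 := by
      rw [hc] at hkey
      intro k hk
      have := (Finset.sum_eq_zero_iff_of_nonneg (fun i hi => by
        rcases seatW_zo η hη w i with h | h <;> rw [h] <;> norm_num)).mp hkey k hk
      exact this
    refine Finset.sum_eq_zero ?_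
    intro k hk
    rw [Finset.mem_Icc] at hk
    rcases Nat.lt_or_ge k (w+1) with hlt | hge
    · rw [hz k (Finset.mem_Icc.mpr ⟨hk.1, by omega⟩)]; ring
    · rw [seatW_big η w k (by omega)]; ring
  · -- some occupied seat exists
    have hex : ∃ k, 1 ≤ k ∧ k ≤ w ∧ seatW η w k = 1 := by
      by_contra hno
      push_neg at hno
      apply hc
      rw [← hkey]
      refine Finset.sum_eq_zero ?_
      intro k hk
      rw [Finset.mem_Icc] at hk
      rcases seatW_zo η hη w k with h | h
      · exact h
      · exact absurd h (hno k hk.1 hk.2)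
    obtain ⟨k₀, hk1, hk2, hk3⟩ := hex
    have := sum_ind_one (fun k => 1 - seatW η w k) (w+1)
      (fun k _ _ => by rcases seatW_zo η hη w k with h | h <;> simp [h])
      ⟨k₀, hk1, by omega, by simp [hk3]⟩
    beta_reduce at this
    calc ∑ k ∈ Icc 1 (w+1), seatW η w k * ∏ m ∈ Ico 1 k, (1 - seatW η w m)
        = ∑ k ∈ Icc 1 (w+1), (1 - (1 - seatW η w k)) * ∏ m ∈ Ico 1 k, (1 - seatW η w m) :=
          Finset.sum_congr rfl (fun k _ => by ring)
      _ = 1 := this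

lemma key (η : ℕ → ℤ) (hη : ∀ x, η x = 0 ∨ η x = 1) :
    ∀ w, ∑ k ∈ Icc 1 w, seatW η w k = carrierInf η w := by
  intro w
  induction w with
  | zero => simp [carrierInf]
  | succ w ih =>
    have hsplit : ∑ k ∈ Icc 1 (w+1), seatW η (w+1) k
        = ∑ k ∈ Icc 1 (w+1), (seatW η w k
            + η (w+1) * ((1 - seatW η w k) * ∏ m ∈ Ico 1 k, seatW η w m)
            - (1 - η (w+1)) * (seatW η w k * ∏ m ∈ Ico 1 k, (1 - seatW η w m))) :=
      Finset.sum_congr rfl (fun k _ => by simp only [seatW]; ring)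
    rw [hsplit]
    rw [Finset.sum_sub_distrib, Finset.sum_add_distrib, ← Finset.mul_sum, ← Finset.mul_sum]
    rw [inner_up η hη w, inner_down η hη w ih]
    rw [Finset.sum_Icc_succ_top (show 1 ≤ w + 1 by omega), seatW_big η w (w+1) (by omega), ih]
    have hnn := carrierInf_nonneg η w
    simp only [carrierInf]
    rcases hη (w+1) with h | h
    · rw [h, if_neg (show ¬(0:ℤ) = 1 by norm_num)]
      split_ifs with hc
      · rw [hc, max_eq_right (show (0:ℤ) - 1 ≤ 0 by norm_num)]; ring
      · rw [max_eq_left (by omega)]; ring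
    · rw [h, if_pos (show (1:ℤ) = 1 from rfl)]
      split_ifs with hc <;> ring




lemma sum_up_eq (η : ℕ → ℤ) (hη : ∀ x, η x = 0 ∨ η x = 1) (w : ℕ) :
    ∑ k ∈ Icc 1 (w+1), seatUp η k (w+1) = η (w+1) := by
  calc ∑ k ∈ Icc 1 (w+1), seatUp η k (w+1)
      = ∑ k ∈ Icc 1 (w+1), η (w+1) * ((1 - seatW η w k) * ∏ m ∈ Ico 1 k, seatW η w m) :=
        Finset.sum_congr rfl (fun k _ => by simp only [seatUp, Nat.add_sub_cancel]; ring)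
    _ = η (w+1) * ∑ k ∈ Icc 1 (w+1), (1 - seatW η w k) * ∏ m ∈ Ico 1 k, seatW η w m :=
        (Finset.mul_sum _ _ _).symm
    _ = η (w+1) := by rw [inner_up η hη w]; ring

lemma sum_down_eq (η : ℕ → ℤ) (hη : ∀ x, η x = 0 ∨ η x = 1) (w : ℕ) :
    ∑ k ∈ Icc 1 (w+1), seatDown η k (w+1)
      = (1 - η (w+1)) * (if carrierInf η w = 0 then 0 else 1) := by
  calc ∑ k ∈ Icc 1 (w+1), seatDown η k (w+1)
      = ∑ k ∈ Icc 1 (w+1), (1 - η (w+1)) * (seatW η w k * ∏ m ∈ Ico 1 k, (1 - seatW η w m)) :=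
        Finset.sum_congr rfl (fun k _ => by simp only [seatDown, Nat.add_sub_cancel]; ring)
    _ = (1 - η (w+1)) * ∑ k ∈ Icc 1 (w+1), seatW η w k * ∏ m ∈ Ico 1 k, (1 - seatW η w m) :=
        (Finset.mul_sum _ _ _).symm
    _ = _ := by rw [inner_down η hη w (key η hη w)]

lemma record_iff (η : ℕ → ℤ) (hη : ∀ x, η x = 0 ∨ η x = 1) (w : ℕ) :
    recordInd η (w+1) = 1 ↔ (η (w+1) = 0 ∧ carrierInf η w = 0) := by
  unfold recordInd
  rw [Finset.sum_add_distrib, sum_up_eq η hη w, sum_down_eq η hη w]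
  rcases hη (w+1) with h | h <;> rw [h] <;> split_ifs with hc <;>
    simp [hc] <;> norm_num

theorem record_characterization_aux (η : ℕ → ℤ) (hη : ∀ x, η x = 0 ∨ η x = 1)
    (x : ℕ) (hx : 1 ≤ x) :
    (recordInd η x = 1 ↔
      ∀ z, 1 ≤ z → z ≤ x → 0 < ∑ y ∈ Finset.Icc z x, (1 - 2 * η y)) ∧
    (recordInd η x = 1 ↔ carrierInf η (x - 1) = 0 ∧ carrierInf η x = 0) := by
  obtain ⟨w, rfl⟩ : ∃ w, x = w + 1 := ⟨x - 1, by omega⟩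
  have hx1 : w + 1 - 1 = w := by omega
  have hrec := record_iff η hη w
  have hnn := carrierInf_nonneg η w
  constructor
  · rw [hrec]
    constructor
    · rintro ⟨h0, hc⟩ z h1 h2
      rcases Nat.eq_or_lt_of_le h2 with he | hlt
      · subst he
        rw [Icc_self, sum_singleton, h0]; norm_num
      · have hL := lemL η hη w z h1 (by omega)
        rw [Finset.sum_Icc_succ_top h2, h0]
        rw [hc] at hL
        omega
    · intro hall
      have h0 : η (w+1) = 0 := by
        have h := hall (w+1) (by omega) (le_refl _)
        rw [Icc_self, sum_singleton] at h
        rcases hη (w+1) with hh | hh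
        · exact hh
        · rw [hh] at h; omega
      refine ⟨h0, ?_⟩
      by_contra hc
      have hpos : 0 < carrierInf η w := lt_of_le_of_ne hnn (Ne.symm hc)
      obtain ⟨z, h1, h2, h3⟩ := lemM η hη w hpos
      have h := hall z h1 (by omega)
      rw [Finset.sum_Icc_succ_top (by omega), h0] at h
      omega
  · rw [hrec, hx1]
    constructor
    · rintro ⟨h0, hc⟩
      refine ⟨hc, ?_⟩
      simp only [carrierInf]
      rw [h0, if_neg (show ¬(0:ℤ) = 1 by norm_num), hc]
      norm_num
    · rintro ⟨hc, hc1⟩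
      refine ⟨?_, hc⟩
      rcases hη (w+1) with h | h
      · exact h
      · exfalso
        simp only [carrierInf] at hc1
        rw [h, if_pos (show (1:ℤ) = 1 from rfl), hc] at hc1
        omega

end RecordAux

/-- characterizations of records. -/
theorem record_characterization (η : ℕ → ℤ) (hη : ∀ x, η x = 0 ∨ η x = 1)
    (x : ℕ) (hx : 1 ≤ x) :
    (recordInd η x = 1 ↔
      ∀ z, 1 ≤ z → z ≤ x → 0 < ∑ y ∈ Finset.Icc z x, (1 - 2 * η y)) ∧
    (recordInd η x = 1 ↔ carrierInf η (x - 1) = 0 ∧ carrierInf η x = 0) :=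
  record_characterization_aux η hη x hx
end

section
/- Let η ∈ {0,1}^ℕ. For any k ∈ ℕ and x ∈ ℕ with s_k(η,x) < ∞: if η(s_k(η,x)) = 1 then W_ℓ(η, s_k(η,x)) = ℓ for all 1 ≤ ℓ ≤ k+1, and if η(s_k(η,x)) = 0 then W_ℓ(η, s_k(η,x)) = 0 for all 1 ≤ ℓ ≤ k+1. -/
/-!
Seat occupations are 0/1-valued and the capacity-`ℓ` carrier counts the occupied seats among
`1, …, ℓ`. The counter `ξ_k` advances at `y` exactly when the particle at `y` causes no event on
seats `1, …, k`: a ball finds them all occupied, a hole finds them all empty. Since `x ≥ 1`, the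
first time `s_k(η,x)` at which `ξ_k` reaches `x` is such a step. Hence just before it
`W_ℓ ≥ ℓ - 1` (ball) or `W_ℓ ≤ 1` (hole) for every `ℓ ≤ k + 1`, and that particle fills
(empties) the carrier.
-/

open Finset

lemma sum_Icc_one_sub_mul_prod_Ico {R : Type*} [CommRing R] (f : ℕ → R) (l : ℕ) :
    ∑ m ∈ Icc 1 l, (1 - f m) * ∏ j ∈ Ico 1 m, f j = 1 - ∏ m ∈ Icc 1 l, f m := by
  induction l with
  | zero => simp
  | succ n ih =>
    rw [sum_Icc_succ_top (by omega), prod_Icc_succ_top (by omega), Ico_add_one_right_eq_Icc, ih]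
    ring

lemma prod_eq_zero_or_one {ι : Type*} {s : Finset ι} {f : ι → ℤ}
    (hf : ∀ i ∈ s, f i = 0 ∨ f i = 1) : ∏ i ∈ s, f i = 0 ∨ ∏ i ∈ s, f i = 1 :=
  prod_induction f (fun a => a = 0 ∨ a = 1)
    (by rintro a b (rfl | rfl) (rfl | rfl) <;> simp) (Or.inr rfl) hf

lemma prod_eq_ite_sum_eq_card {ι : Type*} {s : Finset ι} {f : ι → ℤ}
    (hf : ∀ i ∈ s, f i = 0 ∨ f i = 1) :
    ∏ i ∈ s, f i = if ∑ i ∈ s, f i = #s then 1 else 0 := by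
  have hsum : ∑ i ∈ s, f i = #s ↔ ∀ i ∈ s, f i = 1 := by
    rw [card_eq_sum_ones, Nat.cast_sum, Nat.cast_one]
    exact sum_eq_sum_iff_of_le fun i hi => by rcases hf i hi with h | h <;> simp [h]
  split_ifs with h
  · exact prod_eq_one (hsum.1 h)
  · obtain ⟨i, hi, hne⟩ := not_forall₂.1 (mt hsum.2 h)
    exact prod_eq_zero hi ((hf i hi).resolve_right hne)

lemma seatW_succ (η : ℕ → ℤ) (n m : ℕ) :
    seatW η (n + 1) m = seatW η n m + seatUp η m (n + 1) - seatDown η m (n + 1) := by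
  rw [seatW, seatUp, seatDown, Nat.add_sub_cancel]

lemma sum_seatUp_succ (η : ℕ → ℤ) (n ℓ : ℕ) :
    ∑ m ∈ Icc 1 ℓ, seatUp η m (n + 1) = η (n + 1) * (1 - ∏ m ∈ Icc 1 ℓ, seatW η n m) := by
  simp only [seatUp, Nat.add_sub_cancel, mul_assoc, ← mul_sum,
    sum_Icc_one_sub_mul_prod_Ico]

lemma sum_seatDown_succ (η : ℕ → ℤ) (n ℓ : ℕ) :
    ∑ m ∈ Icc 1 ℓ, seatDown η m (n + 1)
      = (1 - η (n + 1)) * (1 - ∏ m ∈ Icc 1 ℓ, (1 - seatW η n m)) := by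
  rw [← sum_Icc_one_sub_mul_prod_Ico (fun m => 1 - seatW η n m), mul_sum]
  refine sum_congr rfl fun m _ => ?_
  rw [seatDown, Nat.add_sub_cancel]
  ring

lemma sum_seatW_succ (η : ℕ → ℤ) (n ℓ : ℕ) :
    ∑ m ∈ Icc 1 ℓ, seatW η (n + 1) m = ∑ m ∈ Icc 1 ℓ, seatW η n m
      + η (n + 1) * (1 - ∏ m ∈ Icc 1 ℓ, seatW η n m)
      - (1 - η (n + 1)) * (1 - ∏ m ∈ Icc 1 ℓ, (1 - seatW η n m)) := by
  simp only [seatW_succ, sum_sub_distrib, sum_add_distrib, sum_seatUp_succ, sum_seatDown_succ]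

lemma xiSeat_succ (η : ℕ → ℤ) (k n : ℕ) :
    xiSeat η k (n + 1) = xiSeat η k n + (η (n + 1) * ∏ m ∈ Icc 1 k, seatW η n m
      + (1 - η (n + 1)) * ∏ m ∈ Icc 1 k, (1 - seatW η n m)) := by
  rw [xiSeat, xiSeat, sum_Icc_succ_top (by omega), sum_add_distrib, sum_seatUp_succ,
    sum_seatDown_succ]
  push_cast
  ring

lemma seatW_eq_zero_or_one {η : ℕ → ℤ} (hη : ∀ x, η x = 0 ∨ η x = 1) (n m : ℕ) :
    seatW η n m = 0 ∨ seatW η n m = 1 := by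
  induction n generalizing m with
  | zero => exact Or.inl rfl
  | succ n ih =>
    have hP := prod_eq_zero_or_one fun j (_ : j ∈ Ico 1 m) => ih j
    have hQ := prod_eq_zero_or_one (s := Ico 1 m) (f := fun j => 1 - seatW η n j)
      fun j _ => by rcases ih j with h | h <;> simp [h]
    rw [seatW]
    rcases hη (n + 1) with h | h <;> rcases ih m with hw | hw <;> rcases hP with p | p <;>
      rcases hQ with q | q <;> simp [h, hw, p, q]

lemma carrier_nonneg (η : ℕ → ℤ) (ℓ n : ℕ) : 0 ≤ carrier η ℓ n := by
  induction n with
  | zero => exact le_rfl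
  | succ n ih => rw [carrier]; split_ifs <;> omega

lemma carrier_le (η : ℕ → ℤ) (ℓ n : ℕ) : carrier η ℓ n ≤ ℓ := by
  induction n with
  | zero => exact Nat.cast_nonneg ℓ
  | succ n ih => rw [carrier]; split_ifs <;> omega

lemma carrier_succ_of_eq_one {η : ℕ → ℤ} {ℓ n : ℕ} (h : η (n + 1) = 1)
    (hc : (ℓ : ℤ) - 1 ≤ carrier η ℓ n) : carrier η ℓ (n + 1) = ℓ := by
  have := carrier_le η ℓ n
  rw [carrier]; split_ifs <;> omega

lemma carrier_succ_of_eq_zero {η : ℕ → ℤ} {ℓ n : ℕ} (h : η (n + 1) = 0)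
    (hc : carrier η ℓ n ≤ 1) : carrier η ℓ (n + 1) = 0 := by
  have := carrier_nonneg η ℓ n
  rw [carrier]; split_ifs <;> omega

theorem carrier_eq_sum_seatW {η : ℕ → ℤ} (hη : ∀ x, η x = 0 ∨ η x = 1) (ℓ n : ℕ) :
    carrier η ℓ n = ∑ m ∈ Icc 1 ℓ, seatW η n m := by
  induction n with
  | zero => simp [carrier, seatW]
  | succ n ih =>
    have hW := seatW_eq_zero_or_one hη n
    have hP := prod_eq_ite_sum_eq_card fun m (_ : m ∈ Icc 1 ℓ) => hW m
    have hQ := prod_eq_ite_sum_eq_card (s := Icc 1 ℓ) (f := fun m => 1 - seatW η n m)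
      fun m _ => by rcases hW m with h | h <;> simp [h]
    simp only [sum_sub_distrib, sum_const, Nat.card_Icc, add_tsub_cancel_right, nsmul_eq_mul,
      mul_one] at hP hQ
    have h0 := carrier_nonneg η ℓ n
    have hℓ := carrier_le η ℓ n
    rw [sum_seatW_succ, ← ih, hP, hQ, carrier]
    rcases hη (n + 1) with h | h <;> rw [h] <;> split_ifs <;> omega

lemma sub_one_le_carrier_of_seatW_eq_one {η : ℕ → ℤ} (hη : ∀ x, η x = 0 ∨ η x = 1)
    {ℓ n : ℕ} (h : ∀ m ∈ Ico 1 ℓ, seatW η n m = 1) : (ℓ : ℤ) - 1 ≤ carrier η ℓ n := by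
  rcases Nat.eq_zero_or_pos ℓ with rfl | hℓ
  · have := carrier_nonneg η 0 n
    omega
  rw [carrier_eq_sum_seatW hη, ← Ico_add_one_right_eq_Icc, sum_Ico_succ_top hℓ,
    sum_congr rfl h, sum_const, Nat.card_Ico, nsmul_one, Nat.cast_sub hℓ, Nat.cast_one]
  have := seatW_eq_zero_or_one hη n ℓ
  omega

lemma carrier_le_one_of_seatW_eq_zero {η : ℕ → ℤ} (hη : ∀ x, η x = 0 ∨ η x = 1)
    {ℓ n : ℕ} (h : ∀ m ∈ Ico 1 ℓ, seatW η n m = 0) : carrier η ℓ n ≤ 1 := by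
  rcases Nat.eq_zero_or_pos ℓ with rfl | hℓ
  · have := carrier_le η 0 n
    omega
  rw [carrier_eq_sum_seatW hη, ← Ico_add_one_right_eq_Icc, sum_Ico_succ_top hℓ,
    sum_congr rfl h, sum_const_zero, zero_add]
  have := seatW_eq_zero_or_one hη n ℓ
  omega

lemma exists_sSeat_eq_succ {η : ℕ → ℤ} {k x : ℕ} (hx : 1 ≤ x)
    (hfin : ∃ y, xiSeat η k y = x) :
    ∃ t, sSeat η k x = t + 1 ∧ xiSeat η k (t + 1) ≠ xiSeat η k t := by
  have hmem : xiSeat η k (sSeat η k x) = x := Nat.sInf_mem hfin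
  obtain ⟨t, ht⟩ : ∃ t, sSeat η k x = t + 1 :=
    Nat.exists_eq_add_one.2 <| Nat.pos_of_ne_zero fun h0 => by
      have hξ0 : xiSeat η k 0 = 0 := by simp [xiSeat]
      rw [h0, hξ0] at hmem
      omega
  refine ⟨t, ht, fun h => Nat.notMem_of_lt_sInf (by omega : t < sSeat η k x) ?_⟩
  change xiSeat η k t = x
  rw [← h, ← ht, hmem]

lemma seatW_eq_one_of_xiSeat_succ_ne {η : ℕ → ℤ} (hη : ∀ x, η x = 0 ∨ η x = 1) {k t : ℕ}
    (hξ : xiSeat η k (t + 1) ≠ xiSeat η k t) (h : η (t + 1) = 1) :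
    ∀ m ∈ Icc 1 k, seatW η t m = 1 := by
  rw [xiSeat_succ, h] at hξ
  have hP : ∏ m ∈ Icc 1 k, seatW η t m ≠ 0 := by simpa using hξ
  exact fun m hm => (seatW_eq_zero_or_one hη t m).resolve_left (prod_ne_zero_iff.1 hP m hm)

lemma seatW_eq_zero_of_xiSeat_succ_ne {η : ℕ → ℤ} (hη : ∀ x, η x = 0 ∨ η x = 1) {k t : ℕ}
    (hξ : xiSeat η k (t + 1) ≠ xiSeat η k t) (h : η (t + 1) = 0) :
    ∀ m ∈ Icc 1 k, seatW η t m = 0 := by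
  rw [xiSeat_succ, h] at hξ
  have hQ : ∏ m ∈ Icc 1 k, (1 - seatW η t m) ≠ 0 := by simpa using hξ
  exact fun m hm => (seatW_eq_zero_or_one hη t m).resolve_right
    (sub_ne_zero.1 (prod_ne_zero_iff.1 hQ m hm)).symm

theorem carrier_at_sSeat_general (η : ℕ → ℤ) (hη : ∀ x, η x = 0 ∨ η x = 1)
    (k : ℕ) (x : ℕ) (hx : 1 ≤ x)
    (hfin : ∃ y, xiSeat η k y = (x : ℤ)) :
    (η (sSeat η k x) = 1 → ∀ ℓ, 1 ≤ ℓ → ℓ ≤ k + 1 →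
      carrier η ℓ (sSeat η k x) = (ℓ : ℤ)) ∧
    (η (sSeat η k x) = 0 → ∀ ℓ, 1 ≤ ℓ → ℓ ≤ k + 1 →
      carrier η ℓ (sSeat η k x) = 0) := by
  obtain ⟨t, ht, hξ⟩ := exists_sSeat_eq_succ hx hfin
  have hseat : ∀ {ℓ}, ℓ ≤ k + 1 → ∀ m ∈ Ico 1 ℓ, m ∈ Icc 1 k := fun hℓ m hm => by
    simp only [mem_Ico, mem_Icc] at hm ⊢
    omega
  rw [ht]
  refine ⟨fun h ℓ _ hℓ => carrier_succ_of_eq_one h ?_, fun h ℓ _ hℓ => carrier_succ_of_eq_zero h ?_⟩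
  · exact sub_one_le_carrier_of_seatW_eq_one hη fun m hm =>
      seatW_eq_one_of_xiSeat_succ_ne hη hξ h m (hseat hℓ m hm)
  · exact carrier_le_one_of_seatW_eq_zero hη fun m hm =>
      seatW_eq_zero_of_xiSeat_succ_ne hη hξ h m (hseat hℓ m hm)

/-- carrier values at the positions s_k(η,x) (Lemma carrier_cap). -/
theorem carrier_at_sSeat (η : ℕ → ℤ) (hη : ∀ x, η x = 0 ∨ η x = 1)
    (k : ℕ) (hk : 1 ≤ k) (x : ℕ) (hx : 1 ≤ x)
    (hfin : ∃ y, xiSeat η k y = (x : ℤ)) :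
    (η (sSeat η k x) = 1 → ∀ ℓ, 1 ≤ ℓ → ℓ ≤ k + 1 →
      carrier η ℓ (sSeat η k x) = (ℓ : ℤ)) ∧
    (η (sSeat η k x) = 0 → ∀ ℓ, 1 ≤ ℓ → ℓ ≤ k + 1 →
      carrier η ℓ (sSeat η k x) = 0) :=
  carrier_at_sSeat_general η hη k x hx hfin
end

section
/- The k-skip maps form a semigroup: for any η ∈ {0,1}^ℕ, any k, ℓ ∈ ℕ and any x ∈ ℤ_{≥0}, Ψ_k(Ψ_ℓ(η))(x) = Ψ_{k+ℓ}(η)(x). -/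
set_option linter.unusedSectionVars false

/-- event indicator for seats 1..k at position x -/
def Dk (η : ℕ → ℤ) (k x : ℕ) : ℤ :=
  η x * (1 - ∏ m ∈ Finset.Icc 1 k, seatW η (x-1) m)
    + (1 - η x) * (1 - ∏ m ∈ Finset.Icc 1 k, (1 - seatW η (x-1) m))

lemma prod01 (s : Finset ℕ) (f : ℕ → ℤ) (h : ∀ i ∈ s, f i = 0 ∨ f i = 1) :
    (∏ i ∈ s, f i) = 0 ∨ (∏ i ∈ s, f i) = 1 := by
  refine Finset.prod_induction f (fun z => z = 0 ∨ z = 1) ?_ (Or.inr rfl) h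
  rintro a b (rfl | rfl) (rfl | rfl) <;> simp

section
variable {η : ℕ → ℤ} (hη : ∀ x, η x = 0 ∨ η x = 1)

include hη

lemma W01 : ∀ x k, seatW η x k = 0 ∨ seatW η x k = 1 := by
  intro x
  induction x with
  | zero => intro k; left; rfl
  | succ x ih =>
    intro k
    have hp := prod01 (Finset.Ico 1 k) (fun m => seatW η x m) (fun i _ => ih i)
    have hq := prod01 (Finset.Ico 1 k) (fun m => 1 - seatW η x m) (by
      intro i _; rcases ih i with h | h <;> simp [h])
    rcases hη (x+1) with h | h <;> rcases ih k with hw | hw <;>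
      rcases hp with hp | hp <;> rcases hq with hq | hq <;>
      simp only [seatW, h, hw, hp, hq] <;> ring_nf <;> simp

end

lemma sum_up (η : ℕ → ℤ) (k x : ℕ) :
    ∑ m ∈ Finset.Icc 1 k, seatUp η m x
      = η x * (1 - ∏ m ∈ Finset.Icc 1 k, seatW η (x-1) m) := by
  induction k with
  | zero => simp
  | succ k ih =>
    rw [Finset.sum_Icc_succ_top (by omega), Finset.prod_Icc_succ_top (by omega), ih]
    show _ + η x * _ * (∏ m ∈ Finset.Ico 1 (k+1), seatW η (x-1) m) = _
    rw [Finset.Ico_add_one_right_eq_Icc]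
    ring

lemma sum_down (η : ℕ → ℤ) (k x : ℕ) :
    ∑ m ∈ Finset.Icc 1 k, seatDown η m x
      = (1 - η x) * (1 - ∏ m ∈ Finset.Icc 1 k, (1 - seatW η (x-1) m)) := by
  induction k with
  | zero => simp
  | succ k ih =>
    rw [Finset.sum_Icc_succ_top (by omega), Finset.prod_Icc_succ_top (by omega), ih]
    show _ + (1 - η x) * _ * (∏ m ∈ Finset.Ico 1 (k+1), (1 - seatW η (x-1) m)) = _
    rw [Finset.Ico_add_one_right_eq_Icc]
    ring

lemma xi_succ (η : ℕ → ℤ) (k x : ℕ) :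
    xiSeat η k (x+1) = xiSeat η k x + 1 - Dk η k (x+1) := by
  unfold xiSeat Dk
  rw [Finset.sum_Icc_succ_top (by omega), Finset.sum_add_distrib, sum_up, sum_down]
  push_cast
  ring

lemma xi_zero (η : ℕ → ℤ) (k : ℕ) : xiSeat η k 0 = 0 := by simp [xiSeat]

section
variable {η : ℕ → ℤ} (hη : ∀ x, η x = 0 ∨ η x = 1)
include hη

lemma A01 (k x : ℕ) : (∏ m ∈ Finset.Icc 1 k, seatW η x m) = 0 ∨ (∏ m ∈ Finset.Icc 1 k, seatW η x m) = 1 :=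
  prod01 _ _ (fun i _ => W01 hη x i)

lemma B01 (k x : ℕ) : (∏ m ∈ Finset.Icc 1 k, (1 - seatW η x m)) = 0 ∨ (∏ m ∈ Finset.Icc 1 k, (1 - seatW η x m)) = 1 :=
  prod01 _ _ (by intro i _; rcases W01 hη x i with h | h <;> simp [h])

lemma Dk01 (k x : ℕ) : Dk η k x = 0 ∨ Dk η k x = 1 := by
  unfold Dk
  rcases hη x with h | h <;>
    rcases A01 hη k (x-1) with ha | ha <;> rcases B01 hη k (x-1) with hb | hb <;>
    rw [h, ha, hb] <;> norm_num

lemma xi_step (k x : ℕ) :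
    xiSeat η k (x+1) = xiSeat η k x ∨ xiSeat η k (x+1) = xiSeat η k x + 1 := by
  rcases Dk01 hη k (x+1) with h | h <;> rw [xi_succ, h] <;> [right; left] <;> ring

lemma xi_mono {k x y : ℕ} (hxy : x ≤ y) : xiSeat η k x ≤ xiSeat η k y := by
  induction y, hxy using Nat.le_induction with
  | base => exact le_refl _
  | succ y hy ih => rcases xi_step hη k y with h | h <;> omega

end

section
variable {η : ℕ → ℤ} (hη : ∀ x, η x = 0 ∨ η x = 1) (k : ℕ)
  (hfin : ∀ i : ℕ, ∃ x, xiSeat η k x = (i : ℤ))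

include hfin

lemma xi_sSeat (i : ℕ) : xiSeat η k (sSeat η k i) = (i : ℤ) :=
  Nat.sInf_mem (hfin i)

lemma sSeat_min {i x : ℕ} (hx : x < sSeat η k i) : xiSeat η k x ≠ (i : ℤ) :=
  Nat.notMem_of_lt_sInf hx

lemma sSeat_zero : sSeat η k 0 = 0 :=
  Nat.sInf_eq_zero.mpr (Or.inl (by simp [Set.mem_setOf_eq, xi_zero]))

lemma sSeat_pos (i : ℕ) : 1 ≤ sSeat η k (i+1) := by
  by_contra h
  have h0 : sSeat η k (i+1) = 0 := by omega
  have := xi_sSeat k hfin (i+1)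
  rw [h0, xi_zero] at this
  omega

include hη

lemma xi_pred (i : ℕ) : xiSeat η k (sSeat η k (i+1) - 1) = (i : ℤ) := by
  have h1 := sSeat_pos k hfin i
  have h2 := xi_sSeat k hfin (i+1)
  have h3 : sSeat η k (i+1) - 1 + 1 = sSeat η k (i+1) := by omega
  have h4 := xi_step hη k (sSeat η k (i+1) - 1)
  rw [h3] at h4
  have h5 := sSeat_min k hfin (show sSeat η k (i+1) - 1 < sSeat η k (i+1) by omega)
  push_cast at h2 h5 ⊢
  omega

lemma sSeat_lt (i : ℕ) : sSeat η k i < sSeat η k (i+1) := by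
  by_contra h
  have := xi_mono hη (k := k) (show sSeat η k (i+1) ≤ sSeat η k i by omega)
  rw [xi_sSeat k hfin, xi_sSeat k hfin] at this
  push_cast at this; omega

lemma xi_between {i x : ℕ} (h1 : sSeat η k i ≤ x) (h2 : x < sSeat η k (i+1)) :
    xiSeat η k x = (i : ℤ) := by
  have l1 := xi_mono hη (k := k) h1
  have l2 := xi_mono hη (k := k) (show x ≤ sSeat η k (i+1) - 1 by omega)
  rw [xi_sSeat k hfin] at l1
  rw [xi_pred hη k hfin] at l2
  omega

lemma Dk_between {i x : ℕ} (h1 : sSeat η k i < x) (h2 : x < sSeat η k (i+1)) :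
    Dk η k x = 1 := by
  have e1 : xiSeat η k x = (i : ℤ) := xi_between hη k hfin (by omega) h2
  have e2 : xiSeat η k (x-1) = (i : ℤ) := xi_between hη k hfin (by omega) (by omega)
  have h3 : x - 1 + 1 = x := by omega
  have := xi_succ η k (x-1)
  rw [h3] at this
  omega

lemma Dk_sSeat (i : ℕ) : Dk η k (sSeat η k (i+1)) = 0 := by
  have h1 := sSeat_pos k hfin i
  have h2 := xi_sSeat k hfin (i+1)
  have h3 := xi_pred hη k hfin i
  have h4 : sSeat η k (i+1) - 1 + 1 = sSeat η k (i+1) := by omega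
  have := xi_succ η k (sSeat η k (i+1) - 1)
  rw [h4] at this
  push_cast at h2 h3
  omega

end

lemma prod_split (f : ℕ → ℤ) {ℓ m : ℕ} (hm : ℓ < m) :
    (∏ j ∈ Finset.Ico 1 m, f j)
      = (∏ j ∈ Finset.Icc 1 ℓ, f j) * ∏ j ∈ Finset.Ico (ℓ+1) m, f j := by
  rw [← Finset.prod_Ico_consecutive f (by omega : 1 ≤ ℓ+1) (by omega : ℓ+1 ≤ m),
    Finset.Ico_add_one_right_eq_Icc]

lemma prod_splitIcc (f : ℕ → ℤ) {ℓ K : ℕ} (h : ℓ ≤ K) :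
    (∏ j ∈ Finset.Icc 1 K, f j)
      = (∏ j ∈ Finset.Icc 1 ℓ, f j) * ∏ j ∈ Finset.Ico (ℓ+1) (K+1), f j := by
  rw [← Finset.Ico_add_one_right_eq_Icc, prod_split f (show ℓ < K + 1 by omega)]

section
variable {η : ℕ → ℤ} (hη : ∀ x, η x = 0 ∨ η x = 1)
include hη

lemma Dk_0_A {ℓ x : ℕ} (hD : Dk η ℓ x = 0) (h : η x = 1) :
    (∏ m ∈ Finset.Icc 1 ℓ, seatW η (x-1) m) = 1 := by
  unfold Dk at hD; rw [h] at hD; ring_nf at hD ⊢; omega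

lemma Dk_0_B {ℓ x : ℕ} (hD : Dk η ℓ x = 0) (h : η x = 0) :
    (∏ m ∈ Finset.Icc 1 ℓ, (1 - seatW η (x-1) m)) = 1 := by
  unfold Dk at hD; rw [h] at hD; ring_nf at hD ⊢; omega

lemma Dk_1_A {ℓ x : ℕ} (hD : Dk η ℓ x = 1) (h : η x = 1) :
    (∏ m ∈ Finset.Icc 1 ℓ, seatW η (x-1) m) = 0 := by
  unfold Dk at hD; rw [h] at hD; ring_nf at hD ⊢; omega

lemma Dk_1_B {ℓ x : ℕ} (hD : Dk η ℓ x = 1) (h : η x = 0) :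
    (∏ m ∈ Finset.Icc 1 ℓ, (1 - seatW η (x-1) m)) = 0 := by
  unfold Dk at hD; rw [h] at hD; ring_nf at hD ⊢; omega

omit hη in
lemma Dk_mono {ℓ K x : ℕ} (hD : Dk η ℓ x = 1) (hK : ℓ ≤ K) (hx : η x = 0 ∨ η x = 1) :
    Dk η K x = 1 := by
  unfold Dk
  rcases hx with h | h
  · have hB : (∏ m ∈ Finset.Icc 1 ℓ, (1 - seatW η (x-1) m)) = 0 := by
      unfold Dk at hD; rw [h] at hD; ring_nf at hD ⊢; omega
    rw [h, prod_splitIcc (fun m => 1 - seatW η (x-1) m) hK, hB]; ring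
  · have hA : (∏ m ∈ Finset.Icc 1 ℓ, seatW η (x-1) m) = 0 := by
      unfold Dk at hD; rw [h] at hD; ring_nf at hD ⊢; omega
    rw [h, prod_splitIcc (fun m => seatW η (x-1) m) hK, hA]; ring

lemma W_const_above {ℓ : ℕ} (z : ℕ) {m : ℕ} (hD : Dk η ℓ (z+1) = 1) (hm : ℓ < m) :
    seatW η (z+1) m = seatW η z m := by
  have hz : z + 1 - 1 = z := rfl
  rcases hη (z+1) with h | h
  · have hB : (∏ j ∈ Finset.Icc 1 ℓ, (1 - seatW η z j)) = 0 := by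
      have := Dk_1_B hη hD h; rwa [hz] at this
    simp only [seatW, h]
    rw [prod_split (fun j => 1 - seatW η z j) hm, hB]
    ring
  · have hA : (∏ j ∈ Finset.Icc 1 ℓ, seatW η z j) = 0 := by
      have := Dk_1_A hη hD h; rwa [hz] at this
    simp only [seatW, h]
    rw [prod_split (fun j => seatW η z j) hm, hA]
    ring

lemma W_step_shift {ℓ : ℕ} (z : ℕ) (hD : Dk η ℓ (z+1) = 0) {m : ℕ} (hm : 1 ≤ m) :
    seatW η (z+1) (m+ℓ) = seatW η z (m+ℓ)
      + η (z+1) * (1 - seatW η z (m+ℓ)) * (∏ j ∈ Finset.Ico 1 m, seatW η z (j+ℓ))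
      - (1 - η (z+1)) * seatW η z (m+ℓ) * (∏ j ∈ Finset.Ico 1 m, (1 - seatW η z (j+ℓ))) := by
  have hz : z + 1 - 1 = z := rfl
  have hsplit : ∀ f : ℕ → ℤ, (∏ j ∈ Finset.Ico 1 (m+ℓ), f j)
      = (∏ j ∈ Finset.Icc 1 ℓ, f j) * ∏ j ∈ Finset.Ico 1 m, f (j+ℓ) := by
    intro f
    rw [Finset.prod_Ico_add' f 1 m ℓ, prod_split f (show ℓ < m + ℓ by omega),
      Nat.add_comm 1 ℓ]
  rcases hη (z+1) with h | h
  · have hB : (∏ j ∈ Finset.Icc 1 ℓ, (1 - seatW η z j)) = 1 := by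
      have := Dk_0_B hη hD h; rwa [hz] at this
    simp only [seatW, h]
    rw [hsplit (fun j => 1 - seatW η z j), hB]
    ring
  · have hA : (∏ j ∈ Finset.Icc 1 ℓ, seatW η z j) = 1 := by
      have := Dk_0_A hη hD h; rwa [hz] at this
    simp only [seatW, h]
    rw [hsplit (fun j => seatW η z j), hA]
    ring

lemma W_const_iter {ℓ m : ℕ} (hm : ℓ < m) {a b : ℕ} (hab : a ≤ b)
    (hD : ∀ x, a < x → x ≤ b → Dk η ℓ x = 1) : seatW η b m = seatW η a m := by
  induction b, hab using Nat.le_induction with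
  | base => rfl
  | succ b hb ih =>
    rw [W_const_above hη b (hD (b+1) (by omega) le_rfl) hm]
    exact ih (fun x h1 h2 => hD x h1 (by omega))

omit hη in
lemma xi_const_iter {K : ℕ} {a b : ℕ} (hab : a ≤ b)
    (hD : ∀ x, a < x → x ≤ b → Dk η K x = 1) : xiSeat η K b = xiSeat η K a := by
  induction b, hab using Nat.le_induction with
  | base => rfl
  | succ b hb ih =>
    rw [xi_succ, hD (b+1) (by omega) le_rfl,
      ih (fun x h1 h2 => hD x h1 (by omega))]
    ring

end

lemma shift_prod (f : ℕ → ℤ) {ℓ : ℕ} (hA : (∏ j ∈ Finset.Icc 1 ℓ, f j) = 1) (k : ℕ) :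
    (∏ j ∈ Finset.Icc 1 (k+ℓ), f j) = ∏ m ∈ Finset.Icc 1 k, f (m+ℓ) := by
  rw [prod_splitIcc f (show ℓ ≤ k+ℓ by omega), hA, one_mul, ← Finset.Ico_add_one_right_eq_Icc,
    Finset.prod_Ico_add' f 1 (k+1) ℓ]
  congr 1
  congr 1 <;> omega

section
variable {η : ℕ → ℤ} (hη : ∀ x, η x = 0 ∨ η x = 1) (ℓ : ℕ)
  (hfinℓ : ∀ i : ℕ, ∃ x, xiSeat η ℓ x = (i : ℤ))
include hη hfinℓ

lemma skip_seatW : ∀ y m : ℕ, 1 ≤ m →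
    seatW (skip η ℓ) y m = seatW η (sSeat η ℓ y) (m + ℓ) := by
  intro y
  induction y with
  | zero =>
    intro m hm
    rw [sSeat_zero ℓ hfinℓ]
    rfl
  | succ y ih =>
    intro m hm
    set x0 := sSeat η ℓ y with hx0def
    set x1 := sSeat η ℓ (y+1) with hx1def
    have hlt : x0 < x1 := sSeat_lt hη ℓ hfinℓ y
    have hpos : 1 ≤ x1 := sSeat_pos ℓ hfinℓ y
    have hx1 : x1 - 1 + 1 = x1 := by omega
    have hDin : ∀ x, x0 < x → x ≤ x1 - 1 → Dk η ℓ x = 1 := fun x h1 h2 =>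
      Dk_between hη ℓ hfinℓ h1 (by omega)
    have hconst : ∀ m', ℓ < m' → seatW η (x1 - 1) m' = seatW η x0 m' := fun m' hm' =>
      W_const_iter hη hm' (by omega) hDin
    have hD0 : Dk η ℓ x1 = 0 := Dk_sSeat hη ℓ hfinℓ y
    have key : seatW η x1 (m+ℓ) = seatW η x0 (m+ℓ)
        + η x1 * (1 - seatW η x0 (m+ℓ)) * (∏ j ∈ Finset.Ico 1 m, seatW η x0 (j+ℓ))
        - (1 - η x1) * seatW η x0 (m+ℓ)
            * (∏ j ∈ Finset.Ico 1 m, (1 - seatW η x0 (j+ℓ))) := by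
      have hs := W_step_shift hη (ℓ := ℓ) (x1-1) (by rw [hx1]; exact hD0) hm
      rw [hx1] at hs
      have p1 : (∏ j ∈ Finset.Ico 1 m, seatW η (x1-1) (j+ℓ))
          = ∏ j ∈ Finset.Ico 1 m, seatW η x0 (j+ℓ) :=
        Finset.prod_congr rfl (fun j hj => hconst (j+ℓ)
          (by have := (Finset.mem_Ico.mp hj).1; omega))
      have p2 : (∏ j ∈ Finset.Ico 1 m, (1 - seatW η (x1-1) (j+ℓ)))
          = ∏ j ∈ Finset.Ico 1 m, (1 - seatW η x0 (j+ℓ)) :=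
        Finset.prod_congr rfl (fun j hj => by
          rw [hconst (j+ℓ) (by have := (Finset.mem_Ico.mp hj).1; omega)])
      rw [hs, p1, p2, hconst (m+ℓ) (by omega)]
    have q1 : (∏ j ∈ Finset.Ico 1 m, seatW (skip η ℓ) y j)
        = ∏ j ∈ Finset.Ico 1 m, seatW η x0 (j+ℓ) :=
      Finset.prod_congr rfl (fun j hj => ih j (Finset.mem_Ico.mp hj).1)
    have q2 : (∏ j ∈ Finset.Ico 1 m, (1 - seatW (skip η ℓ) y j))
        = ∏ j ∈ Finset.Ico 1 m, (1 - seatW η x0 (j+ℓ)) :=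
      Finset.prod_congr rfl (fun j hj => by rw [ih j (Finset.mem_Ico.mp hj).1])
    have hζ : skip η ℓ (y+1) = η x1 := rfl
    calc seatW (skip η ℓ) (y+1) m
        = seatW (skip η ℓ) y m
            + skip η ℓ (y+1) * (1 - seatW (skip η ℓ) y m)
                * (∏ j ∈ Finset.Ico 1 m, seatW (skip η ℓ) y j)
            - (1 - skip η ℓ (y+1)) * seatW (skip η ℓ) y m
                * (∏ j ∈ Finset.Ico 1 m, (1 - seatW (skip η ℓ) y j)) := rfl
      _ = seatW η x1 (m+ℓ) := by
          rw [q1, q2, hζ, ih m hm, key]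

lemma skip_xi (k : ℕ) : ∀ y : ℕ,
    xiSeat (skip η ℓ) k y = xiSeat η (k+ℓ) (sSeat η ℓ y) := by
  intro y
  induction y with
  | zero => rw [sSeat_zero ℓ hfinℓ, xi_zero, xi_zero]
  | succ y ih =>
    set x0 := sSeat η ℓ y with hx0def
    set x1 := sSeat η ℓ (y+1) with hx1def
    have hlt : x0 < x1 := sSeat_lt hη ℓ hfinℓ y
    have hpos : 1 ≤ x1 := sSeat_pos ℓ hfinℓ y
    have hx1 : x1 - 1 + 1 = x1 := by omega
    have hDin : ∀ x, x0 < x → x ≤ x1 - 1 → Dk η ℓ x = 1 := fun x h1 h2 =>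
      Dk_between hη ℓ hfinℓ h1 (by omega)
    have hconst : ∀ m', ℓ < m' → seatW η (x1 - 1) m' = seatW η x0 m' := fun m' hm' =>
      W_const_iter hη hm' (by omega) hDin
    have hD0 : Dk η ℓ x1 = 0 := Dk_sSeat hη ℓ hfinℓ y
    have hxiconst : xiSeat η (k+ℓ) (x1 - 1) = xiSeat η (k+ℓ) x0 :=
      xi_const_iter (by omega) (fun x h1 h2 =>
        Dk_mono (hDin x h1 h2) (by omega) (hη x))
    have hstep : xiSeat η (k+ℓ) x1 = xiSeat η (k+ℓ) (x1-1) + 1 - Dk η (k+ℓ) x1 := by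
      have := xi_succ η (k+ℓ) (x1-1); rwa [hx1] at this
    have hP : ∀ m, 1 ≤ m → seatW (skip η ℓ) y m = seatW η (x1-1) (m+ℓ) := fun m hm => by
      rw [skip_seatW hη ℓ hfinℓ y m hm, hconst (m+ℓ) (by omega)]
    have hDeq : Dk (skip η ℓ) k (y+1) = Dk η (k+ℓ) x1 := by
      have hζ : skip η ℓ (y+1) = η x1 := rfl
      have hA : (∏ m ∈ Finset.Icc 1 k, seatW (skip η ℓ) y m)
          = ∏ m ∈ Finset.Icc 1 k, seatW η (x1-1) (m+ℓ) :=
        Finset.prod_congr rfl (fun m hm => hP m (Finset.mem_Icc.mp hm).1)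
      have hB : (∏ m ∈ Finset.Icc 1 k, (1 - seatW (skip η ℓ) y m))
          = ∏ m ∈ Finset.Icc 1 k, (1 - seatW η (x1-1) (m+ℓ)) :=
        Finset.prod_congr rfl (fun m hm => by rw [hP m (Finset.mem_Icc.mp hm).1])
      unfold Dk
      rw [Nat.add_sub_cancel, hζ, hA, hB]
      rcases hη x1 with h | h
      · have hB1 := Dk_0_B hη hD0 h
        rw [h, shift_prod (fun j => 1 - seatW η (x1-1) j) hB1 k]
        ring
      · have hA1 := Dk_0_A hη hD0 h
        rw [h, shift_prod (fun j => seatW η (x1-1) j) hA1 k]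
        ring
    rw [xi_succ, ih, hDeq]
    omega

end

/-- the k-skip maps form a semigroup (Proposition semig). -/
theorem skip_semigroup (η : ℕ → ℤ) (hη : ∀ x, η x = 0 ∨ η x = 1)
    (k ℓ : ℕ) (hk : 1 ≤ k) (hℓ : 1 ≤ ℓ)
    (hfin : ∀ j i : ℕ, ∃ x, xiSeat η j x = (i : ℤ))
    (hfin' : ∀ j i : ℕ, ∃ x, xiSeat (skip η ℓ) j x = (i : ℤ))
    (x : ℕ) :
    skip (skip η ℓ) k x = skip η (k + ℓ) x := by
  have hζ01 : ∀ x, skip η ℓ x = 0 ∨ skip η ℓ x = 1 := fun x => hη _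
  cases x with
  | zero =>
    show skip η ℓ (sSeat (skip η ℓ) k 0) = η (sSeat η (k+ℓ) 0)
    rw [sSeat_zero k (hfin' k), sSeat_zero (k+ℓ) (hfin (k+ℓ))]
    show η (sSeat η ℓ 0) = η 0
    rw [sSeat_zero ℓ (hfin ℓ)]
  | succ n =>
    set y1 := sSeat (skip η ℓ) k (n+1) with hy1def
    have hy1 : 1 ≤ y1 := sSeat_pos k (hfin' k) n
    set xstar := sSeat η ℓ y1 with hxstardef
    have e1 : xiSeat η (k+ℓ) xstar = ((n+1 : ℕ) : ℤ) := by
      rw [← skip_xi hη ℓ (hfin ℓ) k y1]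
      exact xi_sSeat k (hfin' k) (n+1)
    obtain ⟨y0, hy0⟩ : ∃ y0, y1 = y0 + 1 := ⟨y1 - 1, by omega⟩
    set x0 := sSeat η ℓ y0 with hx0def
    have e0 : xiSeat (skip η ℓ) k y0 = (n : ℤ) := by
      have := xi_pred hζ01 k (hfin' k) n
      rwa [← hy1def, hy0, Nat.add_sub_cancel] at this
    have e0' : xiSeat η (k+ℓ) x0 = (n : ℤ) := by
      rw [← skip_xi hη ℓ (hfin ℓ) k y0]; exact e0
    have hlt : x0 < xstar := by
      rw [hxstardef, hy0]; exact sSeat_lt hη ℓ (hfin ℓ) y0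
    have hDin : ∀ x, x0 < x → x ≤ xstar - 1 → Dk η ℓ x = 1 := by
      intro x h1 h2
      refine Dk_between hη ℓ (hfin ℓ) h1 ?_
      rw [← hy0]; omega
    have hxiconst : xiSeat η (k+ℓ) (xstar - 1) = xiSeat η (k+ℓ) x0 :=
      xi_const_iter (by omega) (fun x h1 h2 =>
        Dk_mono (hDin x h1 h2) (by omega) (hη x))
    have smain : sSeat η (k+ℓ) (n+1) = xstar := by
      refine le_antisymm (Nat.sInf_le e1) ?_
      by_contra h
      push_neg at h
      have hm := xi_sSeat (k+ℓ) (hfin (k+ℓ)) (n+1)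
      have h2 : sSeat η (k+ℓ) (n+1) ≤ xstar - 1 := by omega
      have h3 := xi_mono hη (k := k+ℓ) h2
      rw [hm, hxiconst, e0'] at h3
      push_cast at h3
      omega
    show skip η ℓ y1 = η (sSeat η (k+ℓ) (n+1))
    rw [smain]
    rfl
end
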